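/- Chernoff's theorem for evolution families: Let $E$ be a Banach space, $Y\subseteq E$ a dense subspace, $A_\tau: Y \to E$ linear maps for $\tau\in[S,T]$, and $U(s,t)$ ($S\le s\le t\le T$) an evolution family of bounded operators on $E$ satisfying $U(s,r)U(r,t)=U(s,t)$, $U(s,s)=I$, $U(s,t)Y\subseteq Y$, and $\frac{\partial}{\partial s}U(s,t)x = -A_s U(s,t)x$ with $s \mapsto \frac{\partial}{\partial s}U(s,t)x$ continuous in $E$ for each $x\in Y$. Let $Q_{t_1,t_2}$ be bounded operators on $E$ such that all products $Q_{\tau_1,\tau_2}\cdots Q_{\tau_{k-1},\tau_k}$ over increasing sequences in $[s,t]$ are bounded in norm by $M(s,t)$, and such that for each $x\in Y$, $\frac{Q_{\tau-\Delta\tau,\tau}-I}{\Delta\tau}U(\tau,t)x \to A_\tau U(\tau,t)x$ as $\Delta\tau\to 0$, uniformly in $\tau\in[s,t]$, for every $[s,t]\subseteq(S,T]$. Then for every $[s,t]\subseteq(S,T]$, every $x\in E$, and every sequence of partitions $s=t_0<\cdots<t_n=t$ with mesh tending to $0$, $Q_{t_0,t_1}\cdots Q_{t_{n-1},t_n}x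 \to U(s,t)x$ in $E$. -/

import Mathlib

open Filter Topology Set

/-- A finite partition `s = t₀ < t₁ < ⋯ < tₙ = t` of the interval `[s,t]`. -/
structure IntervalPartition (s t : ℝ) where
  n : ℕ
  pts : Fin (n + 1) → ℝ
  mono : StrictMono pts
  first : pts 0 = s
  last : pts (Fin.last n) = t

/-- The mesh `max_j (t_{j+1} - t_j)` of a partition. -/
noncomputable def IntervalPartition.mesh {s t : ℝ} (P : IntervalPartition s t) : ℝ :=
  ⨆ j : Fin P.n, (P.pts j.succ - P.pts j.castSucc)

/-- The ordered product `Q_{t₀,t₁} ⋯ Q_{t_{n-1},t_n}` associated with a partition. -/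
noncomputable def IntervalPartition.prodQ {E : Type*} [NormedAddCommGroup E]
    [NormedSpace ℝ E] {s t : ℝ} (P : IntervalPartition s t)
    (Q : ℝ → ℝ → E →L[ℝ] E) : E →L[ℝ] E :=
  (List.ofFn fun j : Fin P.n => Q (P.pts j.castSucc) (P.pts j.succ)).prod

/-- **Chernoff's theorem for evolution families.**  Here `Y` is a dense subspace of the
Banach space `E`, invariant under the evolution family `U`, and the (generally unbounded)
generators `A τ` are recorded as linear maps on `E` whose values are only relevant on `Y`.
If `∂ₛ U(s,t)x = -A_s U(s,t)x` continuously for `x ∈ Y`, the products of the `Q`'s over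
increasing sequences are uniformly bounded, and `(Q_{τ-Δτ,τ} - I)/Δτ · U(τ,t)x → A_τ U(τ,t)x`
uniformly in `τ`, then the products `Q_{t₀,t₁} ⋯ Q_{t_{n-1},t_n}x` over partitions of any
`[s,t] ⊆ (S,T]` converge to `U(s,t)x` as the mesh tends to `0`, for every `x ∈ E`. -/
theorem stmt_7 {E : Type*} [NormedAddCommGroup E] [NormedSpace ℝ E] [CompleteSpace E]
    (S T : ℝ) (hST : S < T)
    (Y : Submodule ℝ E) (hY : Dense (Y : Set E))
    (A : ℝ → E →ₗ[ℝ] E)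
    (U Q : ℝ → ℝ → E →L[ℝ] E)
    (hUev : ∀ s r t : ℝ, S ≤ s → s ≤ r → r ≤ t → t ≤ T → U s r * U r t = U s t)
    (hUid : ∀ s ∈ Icc S T, U s s = 1)
    (hUinv : ∀ s t : ℝ, S ≤ s → s ≤ t → t ≤ T → ∀ x ∈ Y, U s t x ∈ Y)
    (hderiv : ∀ x ∈ Y, ∀ t ∈ Icc S T, ∀ τ ∈ Icc S t,
      HasDerivWithinAt (fun σ => U σ t x) (-(A τ (U τ t x))) (Icc S t) τ)
    (hderivcont : ∀ x ∈ Y, ∀ t ∈ Icc S T,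
      ContinuousOn (fun τ => -(A τ (U τ t x))) (Icc S t))
    (hQbound : ∀ s t : ℝ, S ≤ s → s ≤ t → t ≤ T → ∃ M : ℝ,
      ∀ (k : ℕ) (τ : Fin (k + 1) → ℝ), StrictMono τ → (∀ i, τ i ∈ Icc s t) →
        ‖(List.ofFn fun i : Fin k => Q (τ i.castSucc) (τ i.succ)).prod‖ ≤ M)
    (hQconv : ∀ s t : ℝ, S < s → s ≤ t → t ≤ T → ∀ x ∈ Y, ∀ ε > 0, ∃ δ > 0,
      ∀ τ ∈ Icc s t, ∀ Δτ : ℝ, 0 < Δτ → Δτ < δ →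
        ‖Δτ⁻¹ • ((Q (τ - Δτ) τ - 1) (U τ t x)) - A τ (U τ t x)‖ < ε) :
    ∀ s t : ℝ, S < s → s ≤ t → t ≤ T → ∀ x : E,
      ∀ P : ℕ → IntervalPartition s t,
        Tendsto (fun N => (P N).mesh) atTop (𝓝 0) →
        Tendsto (fun N => (P N).prodQ Q x) atTop (𝓝 (U s t x)) := by
  intro s t hSs hst htT x P hmesh
  have hSsle : S ≤ s := hSs.le
  have hSt : S ≤ t := hSsle.trans hst
  have htmem : t ∈ Icc S T := ⟨hSt, htT⟩
  obtain ⟨M₀, hM₀⟩ := hQbound s t hSsle hst htT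
  set M : ℝ := max M₀ 1 with hMdef
  have hM1 : (1:ℝ) ≤ M := le_max_right _ _
  have hM0 : (0:ℝ) < M := lt_of_lt_of_le one_pos hM1
  have hMb : ∀ (k : ℕ) (τ : Fin (k + 1) → ℝ), StrictMono τ → (∀ i, τ i ∈ Icc s t) →
      ‖(List.ofFn fun i : Fin k => Q (τ i.castSucc) (τ i.succ)).prod‖ ≤ M :=
    fun k τ h1 h2 => (hM₀ k τ h1 h2).trans (le_max_left _ _)
  have hpts_mem : ∀ (P' : IntervalPartition s t) (i : Fin (P'.n + 1)),
      P'.pts i ∈ Icc s t := by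
    intro P' i
    constructor
    · have h := P'.mono.monotone (Fin.zero_le i); rwa [P'.first] at h
    · have h := P'.mono.monotone (Fin.le_last i); rwa [P'.last] at h
  have hprod_norm : ∀ P' : IntervalPartition s t, ‖P'.prodQ Q‖ ≤ M := by
    intro P'
    exact hMb P'.n P'.pts P'.mono (hpts_mem P')
  -- key estimate for `y ∈ Y`
  have key : ∀ y ∈ Y, ∀ ε > 0, ∃ δ > 0, ∀ P' : IntervalPartition s t,
      P'.mesh < δ → ‖P'.prodQ Q y - U s t y‖ < ε := by
    intro y hy ε hε
    set g : ℝ → E := fun σ => -(A σ (U σ t y)) with hgdef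
    have hwderiv : ∀ σ ∈ Icc S t, HasDerivWithinAt (fun σ => U σ t y) (g σ) (Icc S t) σ :=
      fun σ hσ => hderiv y hy t htmem σ hσ
    have hgcont : ContinuousOn g (Icc S t) := hderivcont y hy t htmem
    have hgu : UniformContinuousOn g (Icc S t) :=
      (isCompact_Icc).uniformContinuousOn_of_continuous hgcont
    set D : ℝ := 2 * M * (t - s) + 1 with hDdef
    have hD : 0 < D := by nlinarith
    set ε' : ℝ := ε / D with hε'def
    have hε' : 0 < ε' := div_pos hε hD
    obtain ⟨δ₂, hδ₂pos, hδ₂⟩ := Metric.uniformContinuousOn_iff.mp hgu ε' hε'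
    obtain ⟨δ₁, hδ₁pos, hδ₁⟩ := hQconv s t hSs hst htT y hy ε' hε'
    refine ⟨min δ₁ δ₂, lt_min hδ₁pos hδ₂pos, ?_⟩
    intro P' hPm
    set n : ℕ := P'.n with hndef
    set p : ℕ → ℝ := fun j => P'.pts ⟨min j n, by omega⟩ with hpdef
    have hpeq : ∀ i : Fin (n + 1), p i = P'.pts i := by
      intro i
      simp only [hpdef]
      congr 1
      exact Fin.ext (by simpa using Nat.min_eq_left (Nat.lt_succ_iff.mp i.isLt))
    have hp0 : p 0 = s := by
      have := hpeq 0
      simpa [P'.first] using this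
    have hpt : ∀ j, n ≤ j → p j = t := by
      intro j hj
      have : (⟨min j n, by omega⟩ : Fin (n+1)) = Fin.last n := Fin.ext (by simp; omega)
      simp only [hpdef, this, P'.last]
      exact P'.last
    have hpmono : Monotone p := by
      intro i j hij
      exact P'.mono.monotone (by simp [Fin.le_def]; omega)
    have hpstep : ∀ j, j < n → p j < p (j + 1) := by
      intro j hj
      exact P'.mono (by simp [Fin.lt_def]; omega)
    have hpstrict : ∀ i j : ℕ, i < j → j ≤ n → p i < p j := by
      intro i j hij hjn
      exact (hpstep i (by omega)).trans_le (hpmono (by omega))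
    have hpmem : ∀ k, p k ∈ Icc s t := by
      intro k
      constructor
      · rw [← hp0]; exact hpmono (Nat.zero_le k)
      · have h := hpmono (le_max_left k n)
        rwa [hpt _ (le_max_right k n)] at h
    have hmesh_le : ∀ j, j < n → p (j + 1) - p j ≤ P'.mesh := by
      intro j hj
      have hb : BddAbove (Set.range fun i : Fin P'.n =>
          P'.pts i.succ - P'.pts i.castSucc) := (Set.finite_range _).bddAbove
      have h := le_ciSup hb (⟨j, hj⟩ : Fin P'.n)
      have h1 : p (j + 1) = P'.pts (Fin.succ (⟨j, hj⟩ : Fin P'.n)) := by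
        rw [← hpeq]; congr 1
      have h2 : p j = P'.pts (Fin.castSucc (⟨j, hj⟩ : Fin P'.n)) := by
        rw [← hpeq]; congr 1
      rw [IntervalPartition.mesh]
      rw [h1, h2]
      exact h
    set Vq : ℕ → E →L[ℝ] E :=
      fun k => (List.ofFn fun i : Fin k => Q (p i) (p (i + 1))).prod with hVqdef
    have hVq_norm : ∀ k, k ≤ n → ‖Vq k‖ ≤ M := by
      intro k hk
      have := hMb k (fun i : Fin (k+1) => p i)
        (fun i j hij => hpstrict i j hij (le_trans (Nat.lt_succ_iff.mp j.isLt) hk))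
        (fun i => hpmem i)
      simpa [hVqdef] using this
    have hVq_succ : ∀ k, Vq (k + 1) = Vq k * Q (p k) (p (k + 1)) := by
      intro k
      simp only [hVqdef]
      rw [List.ofFn_succ']
      simp
    set V : ℕ → E := fun k => Vq k (U (p k) t y) with hVdef
    have hV0 : V 0 = U s t y := by
      simp [hVdef, hVqdef, hp0]
    have hVn : V n = P'.prodQ Q y := by
      have hUt : U (p n) t = 1 := by rw [hpt n le_rfl]; exact hUid t htmem
      have hfun : (fun i : Fin n => Q (p i) (p (i + 1)))
          = fun j : Fin P'.n => Q (P'.pts j.castSucc) (P'.pts j.succ) := by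
        funext j
        have h1 : p (j : ℕ) = P'.pts j.castSucc := by
          have h := hpeq j.castSucc; simpa using h
        have h2 : p ((j : ℕ) + 1) = P'.pts j.succ := by
          have h := hpeq j.succ; simpa using h
        rw [h1, h2]
      simp only [hVdef, hVqdef, hUt, ContinuousLinearMap.one_apply,
        IntervalPartition.prodQ, hfun]
    have hterm : ∀ j, j < n → ‖V (j + 1) - V j‖ ≤ M * (2 * ε' * (p (j + 1) - p j)) := by
      intro j hj
      set a : ℝ := p j with hadef
      set τ : ℝ := p (j + 1) with hτdef
      set Δ : ℝ := τ - a with hΔdef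
      have hΔpos : 0 < Δ := sub_pos.mpr (hpstep j hj)
      have haτ : a ≤ τ := by have h := hΔpos; rw [hΔdef] at h; linarith
      have hΔmesh : Δ ≤ P'.mesh := hmesh_le j hj
      have hΔδ : Δ < min δ₁ δ₂ := lt_of_le_of_lt hΔmesh hPm
      have ha_mem : a ∈ Icc s t := hpmem j
      have hτ_mem : τ ∈ Icc s t := hpmem (j + 1)
      -- first error term, from `hQconv`
      have e1 : ‖(Q a τ - 1) (U τ t y) - Δ • (A τ (U τ t y))‖ ≤ ε' * Δ := by
        have h := hδ₁ τ hτ_mem Δ hΔpos (hΔδ.trans_le (min_le_left _ _))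
        rw [show τ - Δ = a by rw [hΔdef]; ring] at h
        have heq : (Q a τ - 1) (U τ t y) - Δ • (A τ (U τ t y))
            = Δ • (Δ⁻¹ • ((Q a τ - 1) (U τ t y)) - A τ (U τ t y)) := by
          rw [smul_sub, smul_inv_smul₀ hΔpos.ne']
        rw [heq, norm_smul, Real.norm_of_nonneg hΔpos.le, mul_comm]
        exact mul_le_mul_of_nonneg_right h.le hΔpos.le
      -- second error term, from the mean value inequality
      have e2 : ‖(U τ t y - U a t y) + Δ • (A τ (U τ t y))‖ ≤ ε' * Δ := by
        have hsub : Icc a τ ⊆ Icc S t := Icc_subset_Icc (hSsle.trans ha_mem.1) hτ_mem.2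
        have hτIcc : τ ∈ Icc S t := hsub (right_mem_Icc.mpr haτ)
        have hf : ∀ σ ∈ Icc a τ,
            HasDerivWithinAt (fun σ => U σ t y - σ • g τ) (g σ - g τ) (Icc a τ) σ := by
          intro σ hσ
          have h1 : HasDerivWithinAt (fun σ => U σ t y) (g σ) (Icc a τ) σ :=
            (hwderiv σ (hsub hσ)).mono hsub
          have h2 : HasDerivWithinAt (fun σ : ℝ => σ • g τ) (g τ) (Icc a τ) σ := by
            simpa using ((hasDerivAt_id σ).smul_const (g τ)).hasDerivWithinAt
          exact h1.sub h2
        have hbound : ∀ σ ∈ Icc a τ, ‖g σ - g τ‖ ≤ ε' := by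
          intro σ hσ
          have hσS : σ ∈ Icc S t := hsub hσ
          have hdist : dist σ τ < δ₂ := by
            rw [Real.dist_eq, abs_of_nonpos (by linarith [hσ.2])]
            have : τ - σ ≤ Δ := by rw [hΔdef]; linarith [hσ.1]
            linarith [hΔδ.trans_le (min_le_right δ₁ δ₂), hΔδ, min_le_right δ₁ δ₂]
          have h := hδ₂ σ hσS τ hτIcc hdist
          rw [dist_eq_norm] at h
          exact h.le
        have hmv := Convex.norm_image_sub_le_of_norm_hasDerivWithin_le hf hbound
          (convex_Icc a τ) (left_mem_Icc.mpr haτ) (right_mem_Icc.mpr haτ)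
        have heq : (fun σ => U σ t y - σ • g τ) τ - (fun σ => U σ t y - σ • g τ) a
            = (U τ t y - U a t y) + Δ • (A τ (U τ t y)) := by
          simp only [hgdef, hΔdef, smul_neg, sub_smul]
          abel
        rw [heq] at hmv
        have hnrm : ‖τ - a‖ = Δ := by rw [Real.norm_of_nonneg (by linarith)]
        rwa [hnrm] at hmv
      have hsum : Q a τ (U τ t y) - U a t y
          = ((Q a τ - 1) (U τ t y) - Δ • (A τ (U τ t y)))
            + ((U τ t y - U a t y) + Δ • (A τ (U τ t y))) := by
        simp only [ContinuousLinearMap.sub_apply, ContinuousLinearMap.one_apply]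
        abel
      have hinner : ‖Q a τ (U τ t y) - U a t y‖ ≤ 2 * ε' * Δ := by
        rw [hsum]
        calc ‖_ + _‖ ≤ ‖(Q a τ - 1) (U τ t y) - Δ • (A τ (U τ t y))‖
              + ‖(U τ t y - U a t y) + Δ • (A τ (U τ t y))‖ := norm_add_le _ _
          _ ≤ ε' * Δ + ε' * Δ := add_le_add e1 e2
          _ = 2 * ε' * Δ := by ring
      have hVdiff : V (j + 1) - V j = Vq j (Q a τ (U τ t y) - U a t y) := by
        simp only [hVdef, hVq_succ j, ContinuousLinearMap.mul_apply, map_sub]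
        rfl
      rw [hVdiff]
      calc ‖Vq j (Q a τ (U τ t y) - U a t y)‖
          ≤ ‖Vq j‖ * ‖Q a τ (U τ t y) - U a t y‖ := (Vq j).le_opNorm _
        _ ≤ M * (2 * ε' * Δ) :=
            mul_le_mul (hVq_norm j hj.le) hinner (norm_nonneg _) hM0.le
    have htotal : ‖P'.prodQ Q y - U s t y‖ ≤ M * (2 * ε') * (t - s) := by
      have htel : P'.prodQ Q y - U s t y = ∑ j ∈ Finset.range n, (V (j + 1) - V j) := by
        rw [Finset.sum_range_sub V n, hVn, hV0]
      rw [htel]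
      calc ‖∑ j ∈ Finset.range n, (V (j + 1) - V j)‖
          ≤ ∑ j ∈ Finset.range n, ‖V (j + 1) - V j‖ := norm_sum_le _ _
        _ ≤ ∑ j ∈ Finset.range n, M * (2 * ε' * (p (j + 1) - p j)) :=
            Finset.sum_le_sum fun j hj => hterm j (Finset.mem_range.mp hj)
        _ = M * (2 * ε') * ∑ j ∈ Finset.range n, (p (j + 1) - p j) := by
            rw [Finset.mul_sum]; congr 1; funext j; ring
        _ = M * (2 * ε') * (t - s) := by
            rw [Finset.sum_range_sub p n, hp0, hpt n le_rfl]
    refine lt_of_le_of_lt htotal ?_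
    have hDε : D * ε' = ε := by
      rw [hε'def]
      field_simp
    have : M * (2 * ε') * (t - s) = D * ε' - ε' := by rw [hDdef]; ring
    rw [this, hDε]
    linarith
  -- conclusion for general `x` by density
  rw [Metric.tendsto_atTop]
  intro ε hε
  set C : ℝ := M + ‖U s t‖ + 1 with hCdef
  have hC : 0 < C := by positivity
  obtain ⟨y, hyY, hyx⟩ := hY.exists_dist_lt x (show 0 < ε / (3 * C) by positivity)
  obtain ⟨δ, hδpos, hδ⟩ := key y hyY (ε / 3) (by positivity)
  obtain ⟨N₀, hN₀⟩ := (Metric.tendsto_atTop.mp hmesh) δ hδpos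
  refine ⟨N₀, fun N hN => ?_⟩
  have hm : (P N).mesh < δ := by
    have := hN₀ N hN
    rw [Real.dist_eq, sub_zero] at this
    exact lt_of_le_of_lt (le_abs_self _) this
  have h2 := hδ (P N) hm
  rw [dist_eq_norm]
  have hd : ‖x - y‖ < ε / (3 * C) := by rwa [dist_eq_norm] at hyx
  have hdecomp : (P N).prodQ Q x - U s t x
      = (P N).prodQ Q (x - y) + ((P N).prodQ Q y - U s t y) + U s t (y - x) := by
    simp only [map_sub]; abel
  have t1 : ‖(P N).prodQ Q (x - y)‖ ≤ M * ‖x - y‖ :=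
    le_trans (((P N).prodQ Q).le_opNorm _)
      (mul_le_mul_of_nonneg_right (hprod_norm (P N)) (norm_nonneg _))
  have t3 : ‖U s t (y - x)‖ ≤ ‖U s t‖ * ‖x - y‖ := by
    calc ‖U s t (y - x)‖ ≤ ‖U s t‖ * ‖y - x‖ := (U s t).le_opNorm _
      _ = ‖U s t‖ * ‖x - y‖ := by rw [norm_sub_rev]
  have hCε : C * (ε / (3 * C)) = ε / 3 := by
    field_simp
  have h13 : (M + ‖U s t‖) * ‖x - y‖ < ε / 3 := by
    have ha : (M + ‖U s t‖) * ‖x - y‖ ≤ C * ‖x - y‖ :=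
      mul_le_mul_of_nonneg_right (by rw [hCdef]; linarith) (norm_nonneg _)
    have hb : C * ‖x - y‖ < ε / 3 := by
      rw [← hCε]; exact mul_lt_mul_of_pos_left hd hC
    exact lt_of_le_of_lt ha hb
  calc ‖(P N).prodQ Q x - U s t x‖
      = ‖(P N).prodQ Q (x - y) + ((P N).prodQ Q y - U s t y) + U s t (y - x)‖ := by
        rw [hdecomp]
    _ ≤ ‖(P N).prodQ Q (x - y)‖ + ‖(P N).prodQ Q y - U s t y‖ + ‖U s t (y - x)‖ :=
        norm_add₃_le
    _ < ε := by nlinarith [norm_nonneg (x - y)]
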